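/- arXiv:2408.17055 — 2 statements merged into one kernel-verified Lean document; each statement's English description precedes it below -/
import Mathlib

section
/- Let ι : ℤ/3ℤ → ℤ/9ℤ be the group homomorphism determined by ι(1) = 3, and define group homomorphisms φ, φ' : (ℤ/9ℤ) × (ℤ/3ℤ) → ℤ/9ℤ by φ(x, y) = 3·x + ι(y) and φ'(x, y) = 3·x − ι(y). Then there is no group automorphism θ of ℤ/9ℤ such that θ ∘ φ = φ'. -/
/-- There is no automorphism `θ` of `ℤ/9ℤ` conjugating
`φ(x,y) = 3x + ι y` to `φ'(x,y) = 3x − ι y`, where `ι : ℤ/3ℤ → ℤ/9ℤ` sends `1` to `3`. -/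
theorem no_conjugating_automorphism_mod_nine
    (ι : ZMod 3 →+ ZMod 9) (hι : ι 1 = 3)
    (φ φ' : ZMod 9 × ZMod 3 →+ ZMod 9)
    (hφ : ∀ x y, φ (x, y) = 3 * x + ι y)
    (hφ' : ∀ x y, φ' (x, y) = 3 * x - ι y) :
    ¬ ∃ θ : ZMod 9 ≃+ ZMod 9, ∀ p, θ (φ p) = φ' p := by
  rintro ⟨θ, hθ⟩
  have h0 : ι 0 = 0 := map_zero ι
  have h1 := hθ (1, 0)
  have h2 := hθ (0, 1)
  rw [hφ, hφ', h0] at h1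
  rw [hφ, hφ', hι] at h2
  simp only [mul_one, mul_zero, add_zero, zero_add, sub_zero, zero_sub] at h1 h2
  rw [h1] at h2
  exact absurd h2 (by decide)
end

section
/- Let k be a positive integer with 3 ∤ k and let l_k denote the odd part of k. Let M be an abelian group, and suppose there are group homomorphisms α : D → M and g : M → ℤ/3ℤ such that the sequence D → D → M → ℤ/3ℤ → ℤ/3ℤ (with first and last maps multiplication by k) is exact at the second D, at M, and at the first ℤ/3ℤ, where D is the group of dyadic rationals. Then M is isomorphic to ℤ/l_kℤ. -/
/-- The additive group of dyadic rationals `ℤ[1/2] = {a / 2^n : a ∈ ℤ, n ∈ ℕ}`,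
as an additive subgroup of `ℚ`. -/
def dyadic : AddSubgroup ℚ where
  carrier := {x : ℚ | ∃ (a : ℤ) (n : ℕ), x = (a : ℚ) / 2 ^ n}
  zero_mem' := ⟨0, 0, by norm_num⟩
  add_mem' := by
    rintro x y ⟨a, n, rfl⟩ ⟨b, m, rfl⟩
    refine ⟨a * 2 ^ m + b * 2 ^ n, n + m, ?_⟩
    push_cast
    rw [pow_add]
    field_simp
  neg_mem' := by
    rintro x ⟨a, n, rfl⟩
    exact ⟨-a, n, by push_cast; ring⟩

/-- The odd part (largest odd divisor) of a natural number. -/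
noncomputable def oddPart (k : ℕ) : ℕ := k / 2 ^ (k.factorization 2)

/-! Exactness at the first `ℤ/3ℤ` forces `g = 0`, since `k` is a unit mod 3; so `α` is onto and
`M ≅ D / kD`. Writing `k = 2^v l` with `l` odd, halving is bijective on `D`, so `kD = lD`.
Finally `ℤ → D / lD` is onto because `2` is invertible mod `l` (for `b / 2^n` take `b u` with
`u 2^n ≡ 1 mod l`), and its kernel is `lℤ` because `l` is prime to every power of `2`. -/

open QuotientAddGroup

theorem AddMonoidHom.surjective_of_exact_of_ker_eq_bot {A M N P : Type*} [AddGroup A]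
    [AddGroup M] [AddGroup N] [AddGroup P] {α : A →+ M} {g : M →+ N} {f : N →+ P}
    (hαg : α.range = g.ker) (hgf : g.range = f.ker) (hf : f.ker = ⊥) :
    Function.Surjective α := by
  have hg : g = 0 := AddMonoidHom.range_eq_bot_iff.mp (hgf.trans hf)
  rw [← AddMonoidHom.range_eq_top, hαg, hg]
  exact AddMonoidHom.ker_zero

theorem ZMod.ker_nsmul_id_eq_bot {n k : ℕ} (h : k.Coprime n) :
    (k • AddMonoidHom.id (ZMod n)).ker = ⊥ := by
  refine (AddSubgroup.eq_bot_iff_forall _).mpr fun x hx => ?_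
  rw [AddMonoidHom.mem_ker, AddMonoidHom.nsmul_apply, AddMonoidHom.id_apply, nsmul_eq_mul] at hx
  exact ((ZMod.isUnit_iff_coprime k n).mpr h).mul_right_eq_zero.mp hx

namespace dyadic

theorem intCast_mem (a : ℤ) : (a : ℚ) ∈ dyadic := ⟨a, 0, by simp⟩

theorem div_two_pow_mem {x : ℚ} (hx : x ∈ dyadic) (m : ℕ) : x / 2 ^ m ∈ dyadic := by
  obtain ⟨a, n, rfl⟩ := hx
  exact ⟨a, n + m, by rw [pow_add, div_div]⟩

def ofInt : ℤ →+ dyadic := (Int.castAddHom ℚ).codRestrict dyadic intCast_mem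

@[simp]
theorem coe_ofInt (a : ℤ) : (ofInt a : ℚ) = a := rfl

theorem mem_range_nsmul_iff {k : ℕ} {x : dyadic} :
    x ∈ (k • AddMonoidHom.id dyadic).range ↔ ∃ d ∈ dyadic, (k : ℚ) * d = x := by
  simp [Subtype.ext_iff, nsmul_eq_mul]

theorem range_nsmul_two_pow_mul (v l : ℕ) :
    ((2 ^ v * l) • AddMonoidHom.id dyadic).range = (l • AddMonoidHom.id dyadic).range := by
  ext x
  simp only [mem_range_nsmul_iff]
  constructor
  · rintro ⟨d, hd, hx⟩
    refine ⟨(2 ^ v : ℕ) • d, nsmul_mem hd _, ?_⟩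
    rw [← hx, nsmul_eq_mul]
    push_cast
    ring
  · rintro ⟨d, hd, hx⟩
    refine ⟨d / 2 ^ v, div_two_pow_mem hd v, ?_⟩
    rw [← hx]
    push_cast
    field_simp

theorem ofInt_mem_range_nsmul_iff {l : ℕ} (hl : Nat.Coprime 2 l) (a : ℤ) :
    ofInt a ∈ (l • AddMonoidHom.id dyadic).range ↔ (l : ℤ) ∣ a := by
  rw [mem_range_nsmul_iff]
  constructor
  · rintro ⟨_, ⟨b, n, rfl⟩, h⟩
    have hlb : ((l * b : ℤ) : ℚ) = ((a * 2 ^ n : ℤ) : ℚ) := by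
      rw [coe_ofInt] at h
      push_cast
      rw [← h]
      field_simp
    have hcop : IsCoprime (l : ℤ) (2 ^ n) := by
      exact_mod_cast Nat.isCoprime_iff_coprime.mpr (hl.pow_left n).symm
    exact hcop.dvd_of_dvd_mul_right ⟨b, (Int.cast_injective hlb).symm⟩
  · rintro ⟨c, rfl⟩
    exact ⟨c, intCast_mem c, by rw [coe_ofInt]; push_cast; rfl⟩

theorem exists_ofInt_sub_mem_range_nsmul {l : ℕ} (hl : Nat.Coprime 2 l) (x : dyadic) :
    ∃ a : ℤ, ofInt a - x ∈ (l • AddMonoidHom.id dyadic).range := by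
  obtain ⟨_, b, n, rfl⟩ := x
  obtain ⟨u, w, huw⟩ : IsCoprime ((2 : ℤ) ^ n) l := by
    exact_mod_cast Nat.isCoprime_iff_coprime.mpr (hl.pow_left n)
  refine ⟨b * u, mem_range_nsmul_iff.mpr
    ⟨((-(b * w) : ℤ) : ℚ) / 2 ^ n, div_two_pow_mem (intCast_mem _) n, ?_⟩⟩
  have huw' : (u : ℚ) * 2 ^ n + w * l = 1 := by exact_mod_cast huw
  rw [AddSubgroup.coe_sub, coe_ofInt]
  push_cast
  field_simp
  linear_combination -(b : ℚ) * huw'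

theorem ker_mk_comp_ofInt {l : ℕ} (hl : Nat.Coprime 2 l) :
    ((mk' (l • AddMonoidHom.id dyadic).range).comp ofInt).ker =
      AddSubgroup.zmultiples (l : ℤ) := by
  ext a
  rw [AddMonoidHom.mem_ker, AddMonoidHom.comp_apply, mk'_apply, eq_zero_iff,
    ofInt_mem_range_nsmul_iff hl, Int.mem_zmultiples_iff]

theorem mk_comp_ofInt_surjective {l : ℕ} (hl : Nat.Coprime 2 l) :
    Function.Surjective ((mk' (l • AddMonoidHom.id dyadic).range).comp ofInt) := by
  refine (mk'_surjective _).forall.mpr fun x => ?_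
  obtain ⟨a, ha⟩ := exists_ofInt_sub_mem_range_nsmul hl x
  exact ⟨a, eq_iff_sub_mem.mpr ha⟩

noncomputable def quotientRangeNsmulEquivZMod {l : ℕ} (hl : Nat.Coprime 2 l) :
    (dyadic ⧸ (l • AddMonoidHom.id dyadic).range) ≃+ ZMod l :=
  ((quotientKerEquivOfSurjective _ (mk_comp_ofInt_surjective hl)).symm.trans
    (quotientAddEquivOfEq (ker_mk_comp_ofInt hl))).trans (Int.quotientZMultiplesNatEquivZMod l)

end dyadic

theorem mod_k_K_theory_of_A_general (k : ℕ) (h3 : ¬ (3 ∣ k))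
    {M : Type*} [AddCommGroup M]
    (α : ↥dyadic →+ M) (g : M →+ ZMod 3)
    (hex1 : (k • AddMonoidHom.id ↥dyadic).range = α.ker)
    (hex2 : α.range = g.ker)
    (hex3 : g.range = (k • AddMonoidHom.id (ZMod 3)).ker) :
    Nonempty (M ≃+ ZMod (oddPart k)) := by
  have hα : Function.Surjective α := AddMonoidHom.surjective_of_exact_of_ker_eq_bot hex2 hex3
    (ZMod.ker_nsmul_id_eq_bot ((Nat.Prime.coprime_iff_not_dvd Nat.prime_three).mpr h3).symm)
  have hk : k ≠ 0 := by rintro rfl; exact h3 (dvd_zero 3)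
  have hodd : Nat.Coprime 2 (oddPart k) :=
    (Nat.Prime.coprime_iff_not_dvd Nat.prime_two).mpr (Nat.not_dvd_ordCompl Nat.prime_two hk)
  have hkD : (k • AddMonoidHom.id dyadic).range = (oddPart k • AddMonoidHom.id dyadic).range := by
    conv_lhs => rw [← Nat.ordProj_mul_ordCompl_eq_self k 2]
    exact dyadic.range_nsmul_two_pow_mul _ _
  exact ⟨(quotientKerEquivOfSurjective α hα).symm.trans <|
    (quotientAddEquivOfEq (hex1.symm.trans hkD)).trans
      (dyadic.quotientRangeNsmulEquivZMod hodd)⟩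

/-- Computation of `K₀(A;ℤ_k) ≅ ℤ/l_kℤ` for `3 ∤ k` from the coefficient exact
sequence `D → D → M → ℤ/3 → ℤ/3` (outer maps multiplication by `k`), where `D`
is the group of dyadic rationals and `l_k` is the odd part of `k`. -/
theorem mod_k_K_theory_of_A (k : ℕ) (hk : 0 < k) (h3 : ¬ (3 ∣ k))
    {M : Type*} [AddCommGroup M]
    (α : ↥dyadic →+ M) (g : M →+ ZMod 3)
    (hex1 : (k • AddMonoidHom.id ↥dyadic).range = α.ker)
    (hex2 : α.range = g.ker)
    (hex3 : g.range = (k • AddMonoidHom.id (ZMod 3)).ker) :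
    Nonempty (M ≃+ ZMod (oddPart k)) :=
  mod_k_K_theory_of_A_general k h3 α g hex1 hex2 hex3
end
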